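/- arXiv:2602.14568 — 5 statements merged into one kernel-verified Lean document; each statement's English description precedes it below -/
import Mathlib

section
/- For every real number x with |x| < π/2, tan x = ∑_{n≥0} A_{2n+1} x^{2n+1} / (2n+1)!. -/
/-- A permutation `σ` of `{1,…,n}` (modeled on `Fin n`, positions 0-indexed) is
up-down alternating if `σ₁ < σ₂ > σ₃ < σ₄ > ⋯` (1-indexed). -/
def IsUpDown {n : ℕ} (σ : Equiv.Perm (Fin n)) : Prop :=
  ∀ (i : ℕ) (h : i + 1 < n),
    if i % 2 = 0 then σ ⟨i, Nat.lt_of_succ_lt h⟩ < σ ⟨i + 1, h⟩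
    else σ ⟨i + 1, h⟩ < σ ⟨i, Nat.lt_of_succ_lt h⟩

/-- The number of up-down alternating permutations of `{1,…,n}`; `A 0 = A 1 = 1`. -/
noncomputable def A (n : ℕ) : ℕ := Nat.card {σ : Equiv.Perm (Fin n) // IsUpDown σ}

/-!
Deleting the largest entry from an up-down permutation of `{1,…,n+1}` leaves, on its left, an
up-down arrangement of some `k`-subset `S` and, on its right, one of the complement of `S`; the
maximum must sit at an even (1-indexed) position, so `k` is odd. This gives
`A (n+1) = ∑_{k odd} C(n,k) A_k A_{n-k}` for `n ≥ 1`, i.e. `a_n := [n odd] A_n` satisfies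
`a_{n+1} = [n = 0] + ∑_k C(n,k) a_k a_{n-k}` with `a_0 = 0`. By the Leibniz rule the Taylor
coefficients `d_n = tan⁽ⁿ⁾(0)` obey the same recursion, because `tan' = 1 + tan²`; hence
`d_n = a_n`. Finally `tan` is holomorphic on the disc `|z| < π/2`, where its Taylor series
therefore converges to it.
-/

open Finset Equiv

section Alternating

variable {α β : Type*} [LinearOrder α] [LinearOrder β]

def IsAlternating {m : ℕ} (f : Fin m → α) : Prop :=
  ∀ (i : ℕ) (h : i + 1 < m),
    if i % 2 = 0 then f ⟨i, Nat.lt_of_succ_lt h⟩ < f ⟨i + 1, h⟩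
    else f ⟨i + 1, h⟩ < f ⟨i, Nat.lt_of_succ_lt h⟩

theorem isUpDown_iff_isAlternating {n : ℕ} (σ : Perm (Fin n)) :
    IsUpDown σ ↔ IsAlternating σ := Iff.rfl

theorem StrictMono.isAlternating_comp_iff {g : α → β} (hg : StrictMono g) {m : ℕ}
    {f : Fin m → α} : IsAlternating (g ∘ f) ↔ IsAlternating f := by
  simp only [IsAlternating, Function.comp_apply, hg.lt_iff_lt]

theorem isAlternating_iff_of_odd_peak {k m N : ℕ} (hN : k + 1 + m = N) {f : Fin N → α}
    (hk : Odd k) (hpeak : ∀ i : Fin N, i ≠ ⟨k, by omega⟩ → f i < f ⟨k, by omega⟩) :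
    IsAlternating f ↔ IsAlternating (fun i : Fin k => f (Fin.castLE (by omega) i)) ∧
      IsAlternating (fun j : Fin m => f ⟨k + 1 + j, by omega⟩) := by
  have hk2 : k % 2 = 1 := Nat.odd_iff.mp hk
  constructor
  · intro hf
    refine ⟨fun i h => hf i (by omega), fun i h => ?_⟩
    have := hf (k + 1 + i) (by omega)
    rwa [show (k + 1 + i) % 2 = i % 2 by omega] at this
  · rintro ⟨hleft, hright⟩ i h
    rcases lt_trichotomy (i + 1) k with hik | rfl | hik
    · exact hleft i hik
    · rw [if_pos (by omega)]
      exact hpeak ⟨i, by omega⟩ (by simp [Fin.ext_iff])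
    rcases (Nat.lt_succ_iff.mp hik).eq_or_lt with rfl | hik
    · rw [if_neg (by omega)]
      exact hpeak ⟨k + 1, h⟩ (by simp [Fin.ext_iff])
    · have := hright (i - (k + 1)) (by omega)
      simpa only [show k + 1 + (i - (k + 1)) = i by omega,
        show k + 1 + (i - (k + 1) + 1) = i + 1 by omega,
        show (i - (k + 1)) % 2 = i % 2 by omega] using this

theorem not_isAlternating_of_even_peak {k N : ℕ} (hkN : k < N) (hN : 2 ≤ N) {f : Fin N → α}
    (hk : Even k) (hpeak : ∀ i : Fin N, i ≠ ⟨k, hkN⟩ → f i < f ⟨k, hkN⟩) :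
    ¬ IsAlternating f := by
  have hk2 : k % 2 = 0 := Nat.even_iff.mp hk
  intro hf
  by_cases h : k + 1 < N
  · have := hf k h
    rw [if_pos hk2] at this
    exact (hpeak ⟨k + 1, h⟩ (by simp [Fin.ext_iff])).not_gt this
  · have := hf (k - 1) (by omega)
    rw [if_neg (by omega)] at this
    simp only [show k - 1 + 1 = k by omega] at this
    exact (hpeak ⟨k - 1, by omega⟩ (by simp [Fin.ext_iff]; omega)).not_gt this

end Alternating

theorem Equiv.Perm.apply_lt_of_apply_eq_last {n : ℕ} (σ : Perm (Fin (n + 1))) {p : Fin (n + 1)}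
    (hp : σ p = Fin.last n) (i : Fin (n + 1)) (hi : i ≠ p) : σ i < σ p := by
  rwa [hp, Fin.lt_last_iff_ne_last, ← hp, Ne, σ.injective.eq_iff]

theorem Nat.card_finset_fin_card_eq (n k : ℕ) :
    Nat.card {S : Finset (Fin n) // S.card = k} = n.choose k := by
  rw [Nat.card_eq_fintype_card, Fintype.card_finset_len, Fintype.card_fin]

theorem Finset.card_compl_fin {n k : ℕ} {S : Finset (Fin n)} (hS : S.card = k) :
    Sᶜ.card = n - k := by
  rw [card_compl, hS, Fintype.card_fin]

section Glue

variable {n k : ℕ} (S : Finset (Fin n)) (hS : S.card = k)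

/-- Positions `< k` carry the elements of `S` in the relative order given by `u`, position `k`
carries the maximum, and positions `> k` carry `Sᶜ` in the relative order given by `v`. -/
def glueFun (u : Perm (Fin k)) (v : Perm (Fin (n - k))) (i : Fin (n + 1)) : Fin (n + 1) :=
  if h : (i : ℕ) < k then (S.orderEmbOfFin hS (u ⟨i, h⟩)).castSucc
  else if h' : k < (i : ℕ) then
    (Sᶜ.orderEmbOfFin (card_compl_fin hS)
      (v ⟨i - (k + 1), by have := i.isLt; omega⟩)).castSucc
  else Fin.last n

variable {S hS} (u : Perm (Fin k)) (v : Perm (Fin (n - k)))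

theorem glueFun_castLE (h : k ≤ n + 1) (i : Fin k) :
    glueFun S hS u v (Fin.castLE h i) = (S.orderEmbOfFin hS (u i)).castSucc :=
  dif_pos i.isLt

theorem glueFun_peak (h : k < n + 1) : glueFun S hS u v ⟨k, h⟩ = Fin.last n := by
  simp [glueFun]

theorem glueFun_natAdd (j : Fin (n - k)) (h : k + 1 + j < n + 1) :
    glueFun S hS u v ⟨k + 1 + j, h⟩ =
      (Sᶜ.orderEmbOfFin (card_compl_fin hS) (v j)).castSucc := by
  simp [glueFun, show ¬ k + 1 + (j : ℕ) < k by omega, show k < k + 1 + (j : ℕ) by omega]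

theorem glueFun_injective : Function.Injective (glueFun S hS u v) := by
  have hne : ∀ x y, S.orderEmbOfFin hS x ≠ Sᶜ.orderEmbOfFin (card_compl_fin hS) y :=
    fun x y h => mem_compl.mp (h ▸ orderEmbOfFin_mem _ _ y) (orderEmbOfFin_mem _ _ x)
  intro a b hab
  rcases lt_trichotomy (a : ℕ) k with ha | ha | ha <;>
    rcases lt_trichotomy (b : ℕ) k with hb | hb | hb <;>
    simp [glueFun, ha, hb, ha.not_gt, hb.not_gt, hne, (hne _ _).symm, Fin.castSucc_ne_last,
      (Fin.castSucc_ne_last _).symm] at hab ⊢ <;> exact Fin.ext (by omega)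

variable (S hS) in
noncomputable def gluePerm : Perm (Fin (n + 1)) :=
  Equiv.ofBijective _ <|
    Finite.injective_iff_bijective.mp (glueFun_injective (S := S) (hS := hS) u v)

theorem isUpDown_gluePerm_iff (hk : Odd k) :
    IsUpDown (gluePerm S hS u v) ↔ IsUpDown u ∧ IsUpDown v := by
  have hkn : k ≤ n := hS ▸ (card_le_univ S).trans_eq (Fintype.card_fin n)
  have hleft : (fun i : Fin k => gluePerm S hS u v (Fin.castLE (by omega) i)) =
      (Fin.castSucc ∘ S.orderEmbOfFin hS) ∘ u :=
    funext (glueFun_castLE u v _)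
  have hright : (fun j : Fin (n - k) => gluePerm S hS u v ⟨k + 1 + j, by omega⟩) =
      (Fin.castSucc ∘ Sᶜ.orderEmbOfFin (card_compl_fin hS)) ∘ v :=
    funext fun j => glueFun_natAdd u v j _
  have hpeak : gluePerm S hS u v ⟨k, by omega⟩ = Fin.last n := glueFun_peak u v _
  rw [isUpDown_iff_isAlternating, isAlternating_iff_of_odd_peak (k := k) (m := n - k)
    (by omega) hk, hleft, hright,
    (Fin.strictMono_castSucc.comp (OrderEmbedding.strictMono _)).isAlternating_comp_iff,
    (Fin.strictMono_castSucc.comp (OrderEmbedding.strictMono _)).isAlternating_comp_iff]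
  · rfl
  · exact (gluePerm S hS u v).apply_lt_of_apply_eq_last hpeak

end Glue

theorem Equiv.Perm.card_apply_eq {n : ℕ} (p q : Fin (n + 1)) :
    Nat.card {σ : Perm (Fin (n + 1)) // σ p = q} = n.factorial := by
  classical
  have e := ((equivCongr (finSuccEquiv' p) (Equiv.refl _)).subtypeEquiv
    (p := fun σ => σ p = q) (q := fun e => e none = q) (by simp)).trans (optionSubtype q)
  rw [Nat.card_congr e, Nat.card_eq_fintype_card, Fintype.card_equiv (finSuccAboveEquiv q),
    Fintype.card_fin]

section Count

variable {n k : ℕ}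

noncomputable def glueMap (hkn : k ≤ n) :
    {S : Finset (Fin n) // S.card = k} × Perm (Fin k) × Perm (Fin (n - k)) →
      {σ : Perm (Fin (n + 1)) // σ ⟨k, by omega⟩ = Fin.last n} :=
  fun x => ⟨gluePerm x.1.1 x.1.2 x.2.1 x.2.2, glueFun_peak _ _ _⟩

theorem glueMap_injective (hkn : k ≤ n) : Function.Injective (glueMap hkn) := by
  rintro ⟨⟨S, hS⟩, u, v⟩ ⟨⟨S', hS'⟩, u', v'⟩ h
  have h' : glueFun S hS u v = glueFun S' hS' u' v' :=
    congrArg (fun σ : {σ : Perm (Fin (n + 1)) // _} => ⇑σ.1) h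
  have hl : ∀ x, S.orderEmbOfFin hS (u x) = S'.orderEmbOfFin hS' (u' x) := fun x =>
    Fin.castSucc_injective _ <| by
      rw [← glueFun_castLE u v (by omega), ← glueFun_castLE u' v' (by omega), h']
  obtain rfl : S = S' := by
    have : Set.range (S.orderEmbOfFin hS ∘ u) = Set.range (S'.orderEmbOfFin hS' ∘ u') :=
      congrArg Set.range (funext hl)
    rwa [u.surjective.range_comp,
      u'.surjective.range_comp, range_orderEmbOfFin, range_orderEmbOfFin, coe_inj] at this
  have hr : ∀ j, Sᶜ.orderEmbOfFin (card_compl_fin hS) (v j) =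
      Sᶜ.orderEmbOfFin (card_compl_fin hS) (v' j) := fun j =>
    Fin.castSucc_injective _ <| by
      rw [← glueFun_natAdd (hS := hS) u v j (by omega),
        ← glueFun_natAdd (hS := hS') u' v' j (by omega), h']
  simp only [Prod.mk.injEq, true_and]
  exact ⟨Equiv.ext fun x => (S.orderEmbOfFin hS).injective (hl x),
    Equiv.ext fun j => (Sᶜ.orderEmbOfFin _).injective (hr j)⟩

theorem glueMap_bijective (hkn : k ≤ n) : Function.Bijective (glueMap hkn) := by
  rw [Nat.bijective_iff_injective_and_card]
  refine ⟨glueMap_injective hkn, ?_⟩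
  rw [Perm.card_apply_eq, Nat.card_prod, Nat.card_prod, Nat.card_finset_fin_card_eq,
    Nat.card_perm, Nat.card_perm, Nat.card_fin, Nat.card_fin, ← mul_assoc,
    Nat.choose_mul_factorial_mul_factorial hkn]

theorem card_isUpDown_apply_eq_last_of_odd (hkn : k ≤ n) (hk : Odd k) :
    Nat.card {σ : Perm (Fin (n + 1)) // IsUpDown σ ∧ σ ⟨k, by omega⟩ = Fin.last n} =
      n.choose k * A k * A (n - k) := by
  let f : {S : Finset (Fin n) // S.card = k} × {u : Perm (Fin k) // IsUpDown u} ×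
      {v : Perm (Fin (n - k)) // IsUpDown v} →
      {σ : Perm (Fin (n + 1)) // IsUpDown σ ∧ σ ⟨k, by omega⟩ = Fin.last n} := fun x =>
    ⟨gluePerm x.1.1 x.1.2 x.2.1 x.2.2,
      (isUpDown_gluePerm_iff _ _ hk).mpr ⟨x.2.1.2, x.2.2.2⟩, glueFun_peak _ _ _⟩
  have hf : Function.Bijective f := by
    refine ⟨fun x y h => ?_, fun σ => ?_⟩
    · have := glueMap_injective hkn (a₁ := (x.1, x.2.1, x.2.2)) (a₂ := (y.1, y.2.1, y.2.2))
        (Subtype.ext (congrArg (fun σ => σ.1) h))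
      simp only [Prod.mk.injEq] at this
      exact Prod.ext this.1 (Prod.ext (Subtype.ext this.2.1) (Subtype.ext this.2.2))
    · obtain ⟨⟨S, u, v⟩, hx⟩ := (glueMap_bijective hkn).2 ⟨σ.1, σ.2.2⟩
      have hσ : gluePerm S.1 S.2 u v = σ.1 := congrArg Subtype.val hx
      obtain ⟨hu, hv⟩ := (isUpDown_gluePerm_iff u v hk).mp (hσ ▸ σ.2.1)
      exact ⟨⟨S, ⟨u, hu⟩, ⟨v, hv⟩⟩, Subtype.ext hσ⟩
  rw [← Nat.card_eq_of_bijective f hf, Nat.card_prod, Nat.card_prod,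
    Nat.card_finset_fin_card_eq, mul_assoc]
  rfl

theorem card_isUpDown_apply_eq_last_of_even (hkn : k ≤ n) (hn : n ≠ 0) (hk : Even k) :
    Nat.card {σ : Perm (Fin (n + 1)) // IsUpDown σ ∧ σ ⟨k, by omega⟩ = Fin.last n} = 0 :=
  Nat.card_eq_zero.mpr <| .inl ⟨fun ⟨σ, hσ, hpeak⟩ => not_isAlternating_of_even_peak
    (by omega) (by omega) hk (σ.apply_lt_of_apply_eq_last hpeak) hσ⟩

end Count

theorem A_succ_eq_sum_card (n : ℕ) :
    A (n + 1) = ∑ p : Fin (n + 1),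
      Nat.card {σ : Perm (Fin (n + 1)) // IsUpDown σ ∧ σ p = Fin.last n} := by
  classical
  simp only [A, Nat.card_eq_fintype_card, Fintype.card_subtype]
  rw [card_eq_sum_card_fiberwise (f := fun σ => σ.symm (Fin.last n)) (t := univ) (by simp)]
  simp only [filter_filter, Equiv.symm_apply_eq, eq_comm (a := Fin.last n)]

theorem A_one : A 1 = 1 := by
  simp [A, IsUpDown]

theorem A_succ {n : ℕ} (hn : n ≠ 0) :
    A (n + 1) = ∑ k ∈ range (n + 1), if Odd k then n.choose k * A k * A (n - k) else 0 := by
  rw [A_succ_eq_sum_card, ← Fin.sum_univ_eq_sum_range]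
  refine sum_congr rfl fun p _ => ?_
  split_ifs with hp
  · exact card_isUpDown_apply_eq_last_of_odd (Nat.lt_succ_iff.mp p.isLt) hp
  · exact card_isUpDown_apply_eq_last_of_even (Nat.lt_succ_iff.mp p.isLt) hn
      (Nat.not_odd_iff_even.mp hp)

theorem ite_odd_A_succ (n : ℕ) :
    (if Odd (n + 1) then A (n + 1) else 0) = (if n = 0 then 1 else 0) +
      ∑ k ∈ range (n + 1),
        n.choose k * (if Odd k then A k else 0) * (if Odd (n - k) then A (n - k) else 0) := by
  rcases eq_or_ne n 0 with rfl | hn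
  · simp [A_one]
  have hterm : ∀ k ∈ range (n + 1),
      n.choose k * (if Odd k then A k else 0) * (if Odd (n - k) then A (n - k) else 0) =
        if Even n then (if Odd k then n.choose k * A k * A (n - k) else 0) else 0 := by
    intro k hk
    have : Odd (n - k) ↔ (Odd n ↔ Even k) := Nat.odd_sub (by simpa [Nat.lt_succ_iff] using hk)
    by_cases hk : Odd k <;> by_cases hn : Even n <;>
      simp_all [← Nat.not_even_iff_odd]
  rw [if_neg hn, zero_add, sum_congr rfl hterm]
  by_cases he : Even n <;> simp [he, Nat.odd_add_one, A_succ hn]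

namespace Complex

theorem cos_ne_zero_of_norm_lt {z : ℂ} (hz : ‖z‖ < Real.pi / 2) : cos z ≠ 0 := by
  rw [cos_ne_zero_iff]
  rintro k rfl
  have hk : (1 : ℝ) ≤ |2 * (k : ℝ) + 1| :=
    mod_cast Int.one_le_abs (by omega : 2 * k + 1 ≠ 0)
  have : ‖(2 * (k : ℂ) + 1) * Real.pi / 2‖ = |2 * (k : ℝ) + 1| * Real.pi / 2 := by
    rw [show (2 * (k : ℂ) + 1) * Real.pi / 2 = ((2 * (k : ℝ) + 1) * Real.pi / 2 : ℝ) by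
        push_cast; ring,
      norm_real, Real.norm_eq_abs, abs_div, abs_mul, abs_of_pos Real.pi_pos, abs_two]
  nlinarith [Real.pi_pos]

theorem deriv_tan_eventuallyEq : deriv tan =ᶠ[nhds 0] fun z => 1 + tan z * tan z := by
  filter_upwards [continuous_cos.continuousAt.eventually_ne (y := 0) (by simp)] with z hz
  rw [(hasDerivAt_tan hz).deriv, tan_eq_sin_div_cos, div_mul_div_comm, eq_comm, ← sub_eq_zero]
  field_simp
  linear_combination sin_sq_add_cos_sq z

theorem iteratedDeriv_succ_tan_zero (n : ℕ) :
    iteratedDeriv (n + 1) tan 0 = (if n = 0 then 1 else 0) +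
      ∑ k ∈ range (n + 1), n.choose k * iteratedDeriv k tan 0 *
        iteratedDeriv (n - k) tan 0 := by
  have htan : ContDiffAt ℂ n tan 0 := contDiffAt_tan.mpr (by simp)
  rw [iteratedDeriv_succ', deriv_tan_eventuallyEq.iteratedDeriv_eq n,
    iteratedDeriv_fun_add contDiffAt_const (htan.mul htan), iteratedDeriv_const,
    iteratedDeriv_fun_mul htan htan]

theorem iteratedDeriv_tan_zero (n : ℕ) :
    iteratedDeriv n tan 0 = ((if Odd n then A n else 0 : ℕ) : ℂ) := by
  induction n using Nat.strong_induction_on with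
  | _ n ih =>
  rcases n with _ | n
  · simp
  rw [iteratedDeriv_succ_tan_zero, ite_odd_A_succ,
    sum_congr rfl fun k hk => by rw [ih k (mem_range.mp hk), ih (n - k) (by omega)]]
  push_cast
  rfl

theorem hasSum_tan {z : ℂ} (hz : ‖z‖ < Real.pi / 2) :
    HasSum (fun n : ℕ => (A (2 * n + 1) : ℂ) * z ^ (2 * n + 1) / (2 * n + 1).factorial)
      (tan z) := by
  have hdiff : DifferentiableOn ℂ tan (Metric.ball 0 (Real.pi / 2)) := fun w hw =>
    (differentiableAt_tan.mpr
      (cos_ne_zero_of_norm_lt (mem_ball_zero_iff.mp hw))).differentiableWithinAt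
  have htaylor := hasSum_taylorSeries_on_ball hdiff (mem_ball_zero_iff.mpr hz)
  simp only [iteratedDeriv_tan_zero, sub_zero, smul_eq_mul] at htaylor
  rw [← (show Function.Injective (fun n : ℕ => 2 * n + 1) by intro a b; simp).hasSum_iff
    fun m hm => by simp [show ¬ Odd m from fun ⟨a, ha⟩ => hm ⟨a, ha.symm⟩]] at htaylor
  refine htaylor.congr_fun fun n => ?_
  simp only [Function.comp_apply, odd_two_mul_add_one, if_true]
  field_simp

end Complex

/-- For `|x| < π/2`, `tan x = ∑_{n≥0} A_{2n+1} x^{2n+1} / (2n+1)!`. -/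
theorem tan_eq_sum (x : ℝ) (hx : |x| < Real.pi / 2) :
    HasSum (fun n : ℕ => (A (2 * n + 1) : ℝ) * x ^ (2 * n + 1) / ((2 * n + 1).factorial : ℝ))
      (Real.tan x) := by
  rw [← Complex.hasSum_ofReal, Complex.ofReal_tan]
  exact_mod_cast Complex.hasSum_tan (z := x) (by simpa using hx)
end

section
/- Fix n ≥ 1. For an up-down alternating permutation σ of {1,…,2n+1}, let 2j = σ⁻¹(2n+1) be the (necessarily even) position of the maximum, let V = {σ₁,…,σ_{2j−1}} ⊆ {1,…,2n}, let α be the standardization of the word σ₁σ₂⋯σ_{2j−1} (the unique permutation of {1,…,2j−1} order-isomorphic to it), and let β be the standardization of the word σ_{2j+1}⋯σ_{2n+1}. Then the map σ ↦ (j, V, α, β) is a bijection from the set of up-down alternating permutations of {1,…,2n+1} onto the set of quadruples (j, V, α, β) where 1 ≤ j ≤ n, V is a subset of {1,…,2n} of cardinality 2j−1, α is an up-down alternating permutation of {1,…,2j−1}, and β is an up-down alternating permutation of {1,…,2n+1−2j}. -/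
/-!
At an even 0-indexed position the maximum of an up-down permutation would lie below one of its
neighbours, so it sits at an odd position `2j+1`, and the words to its left and right both start
at even positions. A word starting at an even position alternates exactly where its
standardization does, so `α` and `β` are up-down. A word of distinct values is the increasing
enumeration of its set of values composed with its standardization, so `σ` is recovered from
`(j, V, α, β)`: `V` in the order `α`, then the maximum, then the complement of `V` in the order
`β`. Conversely this word is a permutation for every quadruple, and it is up-down: inside the two
blocks by the previous remark, and at the two junctions because the maximum sits at an odd
position.
-/
open Equiv Function Finset

section Standardization

def IsStandardization {m : ℕ} {γ : Type*} [LT γ] (π : Perm (Fin m)) (w : Fin m → γ) : Prop :=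
  ∀ s t, π s < π t ↔ w s < w t

variable {m : ℕ} {γ : Type*} [LinearOrder γ] {π π' : Perm (Fin m)} {w : Fin m → γ}

theorem exists_isStandardization (hw : Injective w) : ∃ π, IsStandardization π w := by
  have hsorted : StrictMono (w ∘ Tuple.sort w) :=
    (Tuple.monotone_sort w).strictMono_of_injective (hw.comp (Tuple.sort w).injective)
  refine ⟨(Tuple.sort w)⁻¹, fun s t => ?_⟩
  rw [← hsorted.lt_iff_lt]
  simp

theorem isStandardization_comp {e : Fin m → γ} (he : StrictMono e) (π : Perm (Fin m)) :
    IsStandardization π (e ∘ π) :=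
  fun _ _ => he.lt_iff_lt.symm

theorem IsStandardization.unique (hπ : IsStandardization π w) (hπ' : IsStandardization π' w) :
    π = π' := by
  have hmono : StrictMono (π' * π⁻¹) := fun a b hab => by
    rw [Perm.mul_apply, Perm.mul_apply, hπ', ← hπ]
    simpa using hab
  exact (mul_inv_eq_one.mp ((Perm.monotone_iff _).mp hmono.monotone)).symm

theorem IsStandardization.eq_comp (hπ : IsStandardization π w) {e : Fin m → γ}
    (he : StrictMono e) (hwe : ∀ i, w i ∈ Set.range e) : w = e ∘ π := by
  have hcard : (univ.image e).card = m := by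
    rw [card_image_of_injective _ he.injective, card_fin]
  have hmono : StrictMono (w ∘ π.symm) := fun a b hab => by
    rw [comp_apply, comp_apply, ← hπ]
    simpa using hab
  have h1 := orderEmbOfFin_unique hcard (fun i => mem_image_of_mem e (mem_univ i)) he
  have h2 := orderEmbOfFin_unique hcard (f := w ∘ π.symm) (fun i => by
    obtain ⟨k, hk⟩ := hwe (π.symm i)
    simp [← hk]) hmono
  rw [← h1] at h2
  ext i
  simpa using congrFun h2 (π i)

end Standardization

section UpDown

/-- `IsUpDown σ` unfolds to `∀ i, UpDownAt σ i`. -/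
def UpDownAt {M : ℕ} {γ : Type*} [LT γ] (w : Fin M → γ) (i : ℕ) : Prop :=
  ∀ h : i + 1 < M,
    if i % 2 = 0 then w ⟨i, by omega⟩ < w ⟨i + 1, h⟩ else w ⟨i + 1, h⟩ < w ⟨i, by omega⟩

variable {M : ℕ} {γ : Type*} [LinearOrder γ]

theorem IsStandardization.upDownAt_iff {m : ℕ} {π : Perm (Fin m)} {w : Fin M → γ}
    {e : Fin m → Fin M} {c : ℕ} (he : ∀ s, (e s : ℕ) = c + s) (hc : c % 2 = 0)
    (hπ : IsStandardization π (w ∘ e)) {s : ℕ} (hs : s + 1 < m) :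
    UpDownAt π s ↔ UpDownAt w (c + s) := by
  have hM : c + s + 1 < M := by
    have h₁ : (e ⟨s + 1, hs⟩ : ℕ) = c + (s + 1) := he _
    have := (e ⟨s + 1, hs⟩).isLt
    omega
  have he₀ : e ⟨s, by omega⟩ = ⟨c + s, by omega⟩ := Fin.ext (he _)
  have he₁ : e ⟨s + 1, hs⟩ = ⟨c + s + 1, hM⟩ := Fin.ext (he _)
  have hpar : (c + s) % 2 = s % 2 := by omega
  simp only [UpDownAt, hs, hM, forall_true_left, hpar]
  split_ifs <;> rw [hπ, comp_apply, comp_apply, he₀, he₁]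

theorem IsUpDown.of_isStandardization {M m c : ℕ} {σ : Perm (Fin M)} (hσ : IsUpDown σ)
    {e : Fin m → Fin M} (he : ∀ s, (e s : ℕ) = c + s) (hc : c % 2 = 0) {π : Perm (Fin m)}
    (hπ : IsStandardization π (σ ∘ e)) : IsUpDown π :=
  fun s hs => (hπ.upDownAt_iff he hc hs).mpr (hσ (c + s)) hs

variable {p : ℕ} (hp : p < M)

theorem upDownAt_of_forall_le {w : Fin M → γ} (hw : Injective w) (hmax : ∀ i, w i ≤ w ⟨p, hp⟩)
    (hodd : p % 2 = 1) {i : ℕ} (hi : i + 1 = p ∨ i = p) : UpDownAt w i := by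
  have hlt : ∀ k, k ≠ (⟨p, hp⟩ : Fin M) → w k < w ⟨p, hp⟩ :=
    fun k hk => (hmax k).lt_of_ne (hw.ne hk)
  intro hi'
  rcases hi with rfl | rfl
  · rw [if_pos (by omega)]
    exact hlt _ (by simp)
  · rw [if_neg (by omega)]
    exact hlt _ (by simp)

theorem IsUpDown.odd_of_forall_le {σ : Perm (Fin M)} (hσ : IsUpDown σ) (hM : 2 ≤ M)
    (hmax : ∀ i, σ i ≤ σ ⟨p, hp⟩) : p % 2 = 1 := by
  by_contra heven
  by_cases hlast : p + 1 < M
  · have := hσ p hlast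
    rw [if_pos (by omega)] at this
    exact (hmax _).not_gt this
  · have := hσ (p - 1) (by omega)
    rw [if_neg (by omega)] at this
    exact (hmax _).not_gt (by simpa [show p - 1 + 1 = p by omega] using this)

end UpDown

section Decomposition

variable {n : ℕ} (j : Fin n)

def leftPos (s : Fin (2 * (j : ℕ) + 1)) : Fin (2 * n + 1) := ⟨s, by omega⟩

def maxPos : Fin (2 * n + 1) := ⟨2 * j + 1, by omega⟩

def rightPos (s : Fin (2 * (n - 1 - (j : ℕ)) + 1)) : Fin (2 * n + 1) := ⟨2 * j + 2 + s, by omega⟩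

theorem leftPos_injective : Injective (leftPos j) :=
  fun _ _ h => Fin.ext (Fin.mk.inj h)

theorem rightPos_injective : Injective (rightPos j) :=
  fun _ _ h => Fin.ext (by simpa [rightPos] using h)

theorem leftPos_ne_maxPos (s : Fin (2 * (j : ℕ) + 1)) : leftPos j s ≠ maxPos j :=
  Fin.ne_of_val_ne (by simp only [leftPos, maxPos]; omega)

theorem rightPos_ne_maxPos (s : Fin (2 * (n - 1 - (j : ℕ)) + 1)) : rightPos j s ≠ maxPos j :=
  Fin.ne_of_val_ne (by simp only [rightPos, maxPos]; omega)

theorem exists_leftPos_eq_iff (i : Fin (2 * n + 1)) :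
    (∃ s, leftPos j s = i) ↔ (i : ℕ) ≤ 2 * j :=
  ⟨fun ⟨s, hs⟩ => hs ▸ Nat.le_of_lt_succ s.isLt, fun hi => ⟨⟨i, by omega⟩, rfl⟩⟩

theorem leftPos_or_maxPos_or_rightPos (i : Fin (2 * n + 1)) :
    (∃ s, i = leftPos j s) ∨ i = maxPos j ∨ ∃ s, i = rightPos j s := by
  rcases lt_trichotomy (i : ℕ) (2 * j + 1) with hi | hi | hi
  · exact Or.inl ⟨⟨i, hi⟩, rfl⟩
  · exact Or.inr (Or.inl (Fin.ext hi))
  · exact Or.inr (Or.inr ⟨⟨i - (2 * j + 2), by omega⟩, Fin.ext (by simp [rightPos]; omega)⟩)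

theorem funext_blocks {X : Type*} {f g : Fin (2 * n + 1) → X} (hl : f ∘ leftPos j = g ∘ leftPos j)
    (hm : f (maxPos j) = g (maxPos j)) (hr : f ∘ rightPos j = g ∘ rightPos j) : f = g := by
  funext i
  rcases leftPos_or_maxPos_or_rightPos j i with ⟨s, rfl⟩ | rfl | ⟨s, rfl⟩
  · exact congrFun hl s
  · exact hm
  · exact congrFun hr s

theorem card_compl_of_card_eq {V : Finset (Fin (2 * n))} (hV : V.card = 2 * (j : ℕ) + 1) :
    Vᶜ.card = 2 * (n - 1 - (j : ℕ)) + 1 := by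
  rw [card_compl, hV, Fintype.card_fin]
  omega

/-- `σ` decomposes around its maximum into the quadruple `(j, V, α, β)` of the theorem. -/
structure IsMaxSplit (σ : Perm (Fin (2 * n + 1))) (V : Finset (Fin (2 * n)))
    (α : Perm (Fin (2 * (j : ℕ) + 1))) (β : Perm (Fin (2 * (n - 1 - (j : ℕ)) + 1))) : Prop where
  apply_maxPos : σ (maxPos j) = Fin.last (2 * n)
  mem_iff : ∀ v, v ∈ V ↔ ∃ i : Fin (2 * n + 1), (i : ℕ) ≤ 2 * j ∧ σ i = v.castSucc
  left : IsStandardization α (σ ∘ leftPos j)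
  right : IsStandardization β (σ ∘ rightPos j)

end Decomposition

namespace IsMaxSplit

variable {n : ℕ} {j : Fin n} {σ : Perm (Fin (2 * n + 1))} {V : Finset (Fin (2 * n))}
  {α : Perm (Fin (2 * (j : ℕ) + 1))} {β : Perm (Fin (2 * (n - 1 - (j : ℕ)) + 1))}
  (h : IsMaxSplit j σ V α β)
include h

theorem exists_castSucc_eq {i : Fin (2 * n + 1)} (hi : i ≠ maxPos j) :
    ∃ v : Fin (2 * n), v.castSucc = σ i :=
  Fin.exists_castSucc_eq.mpr fun hlast => hi (σ.injective (hlast.trans h.apply_maxPos.symm))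

theorem card_eq : V.card = 2 * (j : ℕ) + 1 := by
  have hmap : V.map Fin.castSuccEmb = univ.image (σ ∘ leftPos j) := by
    ext x
    simp only [mem_map, mem_image, mem_univ, true_and, h.mem_iff, comp_apply,
      Fin.castSuccEmb_apply]
    constructor
    · rintro ⟨v, ⟨i, hi, hσi⟩, rfl⟩
      obtain ⟨s, rfl⟩ := (exists_leftPos_eq_iff j i).mpr hi
      exact ⟨s, hσi⟩
    · rintro ⟨s, rfl⟩
      obtain ⟨v, hv⟩ := h.exists_castSucc_eq (leftPos_ne_maxPos j s)
      exact ⟨v, ⟨leftPos j s, Nat.le_of_lt_succ s.isLt, hv.symm⟩, hv⟩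
  rw [← card_map Fin.castSuccEmb, hmap,
    card_image_of_injective _ (σ.injective.comp (leftPos_injective j)), card_fin]

theorem comp_leftPos : σ ∘ leftPos j = Fin.castSucc ∘ V.orderEmbOfFin h.card_eq ∘ α := by
  refine h.left.eq_comp (Fin.strictMono_castSucc.comp (V.orderEmbOfFin _).strictMono) fun s => ?_
  obtain ⟨v, hv⟩ := h.exists_castSucc_eq (leftPos_ne_maxPos j s)
  have hvV : v ∈ V := (h.mem_iff v).mpr ⟨leftPos j s, Nat.le_of_lt_succ s.isLt, hv.symm⟩
  rw [Set.range_comp, range_orderEmbOfFin, comp_apply, ← hv]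
  exact Set.mem_image_of_mem _ hvV

theorem comp_rightPos :
    σ ∘ rightPos j = Fin.castSucc ∘ Vᶜ.orderEmbOfFin (card_compl_of_card_eq j h.card_eq) ∘ β := by
  refine h.right.eq_comp
    (Fin.strictMono_castSucc.comp (Vᶜ.orderEmbOfFin _).strictMono) fun s => ?_
  obtain ⟨v, hv⟩ := h.exists_castSucc_eq (rightPos_ne_maxPos j s)
  have hvV : v ∉ V := fun hvV => by
    obtain ⟨i, hi, hσi⟩ := (h.mem_iff v).mp hvV
    have : i = rightPos j s := σ.injective (hσi.trans hv)
    rw [this] at hi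
    simp only [rightPos] at hi
    omega
  rw [Set.range_comp, range_orderEmbOfFin, comp_apply, ← hv, coe_compl]
  exact Set.mem_image_of_mem _ hvV

end IsMaxSplit

section Assemble

variable {n : ℕ} (j : Fin n) {V : Finset (Fin (2 * n))} (hV : V.card = 2 * (j : ℕ) + 1)
  (α : Perm (Fin (2 * (j : ℕ) + 1))) (β : Perm (Fin (2 * (n - 1 - (j : ℕ)) + 1)))

noncomputable def assembleFun : Fin (2 * n + 1) → Fin (2 * n + 1) := fun i =>
  if hi : (i : ℕ) < 2 * j + 1 then (V.orderEmbOfFin hV (α ⟨i, hi⟩)).castSucc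
  else if (i : ℕ) = 2 * j + 1 then Fin.last (2 * n)
  else (Vᶜ.orderEmbOfFin (card_compl_of_card_eq j hV) (β ⟨i - (2 * j + 2), by omega⟩)).castSucc

theorem assembleFun_comp_leftPos :
    assembleFun j hV α β ∘ leftPos j = Fin.castSucc ∘ V.orderEmbOfFin hV ∘ α := by
  funext s
  exact dif_pos s.isLt

theorem assembleFun_maxPos : assembleFun j hV α β (maxPos j) = Fin.last (2 * n) := by
  simp [assembleFun, maxPos]

theorem assembleFun_comp_rightPos :
    assembleFun j hV α β ∘ rightPos j =
      Fin.castSucc ∘ Vᶜ.orderEmbOfFin (card_compl_of_card_eq j hV) ∘ β := by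
  funext s
  have hs : (rightPos j s : ℕ) = 2 * j + 2 + s := rfl
  simp only [comp_apply, assembleFun]
  rw [dif_neg (by omega), if_neg (by omega)]
  simp [hs]

theorem exists_assembleFun_leftPos_eq {v : Fin (2 * n)} (hv : v ∈ V) :
    ∃ s, assembleFun j hV α β (leftPos j s) = v.castSucc := by
  obtain ⟨k, rfl⟩ : v ∈ Set.range (V.orderEmbOfFin hV) := by rwa [range_orderEmbOfFin]
  exact ⟨α.symm k, by simpa using congrFun (assembleFun_comp_leftPos j hV α β) (α.symm k)⟩

theorem exists_assembleFun_rightPos_eq {v : Fin (2 * n)} (hv : v ∉ V) :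
    ∃ s, assembleFun j hV α β (rightPos j s) = v.castSucc := by
  obtain ⟨k, rfl⟩ : v ∈ Set.range (Vᶜ.orderEmbOfFin (card_compl_of_card_eq j hV)) := by
    rwa [range_orderEmbOfFin, coe_compl]
  exact ⟨β.symm k, by simpa using congrFun (assembleFun_comp_rightPos j hV α β) (β.symm k)⟩

theorem surjective_assembleFun : Surjective (assembleFun j hV α β) := by
  intro y
  rcases Fin.eq_castSucc_or_eq_last y with ⟨v, rfl⟩ | rfl
  · by_cases hv : v ∈ V
    · obtain ⟨s, hs⟩ := exists_assembleFun_leftPos_eq j hV α β hv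
      exact ⟨_, hs⟩
    · obtain ⟨s, hs⟩ := exists_assembleFun_rightPos_eq j hV α β hv
      exact ⟨_, hs⟩
  · exact ⟨_, assembleFun_maxPos j hV α β⟩

noncomputable def assemble : Perm (Fin (2 * n + 1)) :=
  Equiv.ofBijective _ (Finite.surjective_iff_bijective.mp (surjective_assembleFun j hV α β))

theorem isMaxSplit_assemble : IsMaxSplit j (assemble j hV α β) V α β where
  apply_maxPos := assembleFun_maxPos j hV α β
  mem_iff v := by
    refine ⟨fun hv => ?_, fun ⟨i, hi, hσi⟩ => ?_⟩
    · obtain ⟨s, hs⟩ := exists_assembleFun_leftPos_eq j hV α β hv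
      exact ⟨leftPos j s, Nat.le_of_lt_succ s.isLt, hs⟩
    · obtain ⟨s, rfl⟩ := (exists_leftPos_eq_iff j i).mpr hi
      have := congrFun (assembleFun_comp_leftPos j hV α β) s
      rw [← Fin.castSucc_injective _ (this.symm.trans hσi)]
      exact orderEmbOfFin_mem _ _ _
  left := by
    rw [assemble, coe_ofBijective, assembleFun_comp_leftPos]
    exact isStandardization_comp (Fin.strictMono_castSucc.comp (orderEmbOfFin _ _).strictMono) α
  right := by
    rw [assemble, coe_ofBijective, assembleFun_comp_rightPos]
    exact isStandardization_comp (Fin.strictMono_castSucc.comp (orderEmbOfFin _ _).strictMono) β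

end Assemble

namespace IsMaxSplit

variable {n : ℕ} {j : Fin n} {σ σ' : Perm (Fin (2 * n + 1))} {V : Finset (Fin (2 * n))}
  {α : Perm (Fin (2 * (j : ℕ) + 1))} {β : Perm (Fin (2 * (n - 1 - (j : ℕ)) + 1))}

theorem coe_eq_assembleFun (h : IsMaxSplit j σ V α β) : ⇑σ = assembleFun j h.card_eq α β :=
  funext_blocks j (by rw [h.comp_leftPos, assembleFun_comp_leftPos])
    (by rw [h.apply_maxPos, assembleFun_maxPos])
    (by rw [h.comp_rightPos, assembleFun_comp_rightPos])

theorem perm_unique (h : IsMaxSplit j σ V α β) (h' : IsMaxSplit j σ' V α β) : σ = σ' :=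
  DFunLike.coe_injective (h.coe_eq_assembleFun.trans h'.coe_eq_assembleFun.symm)

theorem isUpDown (h : IsMaxSplit j σ V α β) (hα : IsUpDown α) (hβ : IsUpDown β) :
    IsUpDown σ := by
  intro i
  rcases lt_or_ge (i + 1) (2 * j + 1) with hi | hi
  · have := (h.left.upDownAt_iff (e := leftPos j) (c := 0) (fun s => (zero_add _).symm) rfl hi).mp
      (hα i)
    rwa [zero_add] at this
  rcases le_or_gt i (2 * j + 1) with hi' | hi'
  · exact upDownAt_of_forall_le (p := 2 * j + 1) (by omega) σ.injective
      (fun k => (Fin.le_last (σ k)).trans_eq h.apply_maxPos.symm) (by omega) (by omega)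
  · obtain ⟨s, rfl⟩ : ∃ s, i = 2 * j + 2 + s := ⟨i - (2 * j + 2), by omega⟩
    intro hM
    exact (h.right.upDownAt_iff (fun _ => rfl) (by omega) (by omega)).mp (hβ s) hM

end IsMaxSplit

abbrev SplitData (n : ℕ) :=
  (j : Fin n) ×
    ({V : Finset (Fin (2 * n)) // V.card = 2 * (j : ℕ) + 1} ×
     {α : Equiv.Perm (Fin (2 * (j : ℕ) + 1)) // IsUpDown α} ×
     {β : Equiv.Perm (Fin (2 * (n - 1 - (j : ℕ)) + 1)) // IsUpDown β})

section SplitData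

variable {n : ℕ}

theorem SplitData.eq_of_isMaxSplit {σ : Perm (Fin (2 * n + 1))} {q q' : SplitData n}
    (h : IsMaxSplit q.1 σ q.2.1 q.2.2.1 q.2.2.2) (h' : IsMaxSplit q'.1 σ q'.2.1 q'.2.2.1 q'.2.2.2) :
    q = q' := by
  obtain ⟨j, ⟨V, hV⟩, ⟨α, hα⟩, ⟨β, hβ⟩⟩ := q
  obtain ⟨j', ⟨V', hV'⟩, ⟨α', hα'⟩, ⟨β', hβ'⟩⟩ := q'
  obtain rfl : j = j' := by
    have := congrArg Fin.val (σ.injective (h.apply_maxPos.trans h'.apply_maxPos.symm))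
    simp only [maxPos] at this
    exact Fin.ext (by omega)
  obtain rfl : V = V' := Finset.ext fun v => (h.mem_iff v).trans (h'.mem_iff v).symm
  obtain rfl := h.left.unique h'.left
  obtain rfl := h.right.unique h'.right
  rfl

theorem IsUpDown.exists_isMaxSplit {σ : Perm (Fin (2 * n + 1))} (hσ : IsUpDown σ) (hn : 1 ≤ n) :
    ∃ q : SplitData n, IsMaxSplit q.1 σ q.2.1 q.2.2.1 q.2.2.2 := by
  set p := σ.symm (Fin.last (2 * n))
  have hodd : (p : ℕ) % 2 = 1 :=
    hσ.odd_of_forall_le p.isLt (by omega) fun i => by simp [p, Fin.le_last]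
  let j : Fin n := ⟨p / 2, by omega⟩
  have hp : maxPos j = p := Fin.ext (by simp only [maxPos, j]; omega)
  obtain ⟨α, hα⟩ := exists_isStandardization (σ.injective.comp (leftPos_injective j))
  obtain ⟨β, hβ⟩ := exists_isStandardization (σ.injective.comp (rightPos_injective j))
  let V : Finset (Fin (2 * n)) :=
    univ.filter fun v => ∃ i : Fin (2 * n + 1), (i : ℕ) ≤ 2 * j ∧ σ i = v.castSucc
  have h : IsMaxSplit j σ V α β := ⟨by simp [hp, p], fun v => by simp [V], hα, hβ⟩
  exact ⟨⟨j, ⟨V, h.card_eq⟩,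
    ⟨α, hσ.of_isStandardization (e := leftPos j) (fun s => (zero_add _).symm) rfl hα⟩,
    ⟨β, hσ.of_isStandardization (fun _ => rfl) (by omega) hβ⟩⟩, h⟩

theorem SplitData.exists_isUpDown_isMaxSplit (q : SplitData n) :
    ∃ σ, IsUpDown σ ∧ IsMaxSplit q.1 σ q.2.1 q.2.2.1 q.2.2.2 := by
  obtain ⟨j, ⟨V, hV⟩, ⟨α, hα⟩, ⟨β, hβ⟩⟩ := q
  have h := isMaxSplit_assemble j hV α β
  exact ⟨_, h.isUpDown hα hβ, h⟩

end SplitData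

/-- Here `j : Fin n` encodes the integer `j+1 ∈ {1,…,n}` of the statement, so that the
(0-indexed) position of the maximum is `2j+1`, the left word has length `2j+1` and the right
word has length `2(n−1−j)+1`. -/
theorem alternating_decomposition_bijection (n : ℕ) (hn : 1 ≤ n) :
    ∃ F : {σ : Equiv.Perm (Fin (2 * n + 1)) // IsUpDown σ} →
        (j : Fin n) ×
          ({V : Finset (Fin (2 * n)) // V.card = 2 * (j : ℕ) + 1} ×
           {α : Equiv.Perm (Fin (2 * (j : ℕ) + 1)) // IsUpDown α} ×
           {β : Equiv.Perm (Fin (2 * (n - 1 - (j : ℕ)) + 1)) // IsUpDown β}),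
      Function.Bijective F ∧
      ∀ (σ : {σ : Equiv.Perm (Fin (2 * n + 1)) // IsUpDown σ})
        (j : Fin n)
        (V : {V : Finset (Fin (2 * n)) // V.card = 2 * (j : ℕ) + 1})
        (α : {α : Equiv.Perm (Fin (2 * (j : ℕ) + 1)) // IsUpDown α})
        (β : {β : Equiv.Perm (Fin (2 * (n - 1 - (j : ℕ)) + 1)) // IsUpDown β}),
        F σ = ⟨j, V, α, β⟩ →
          -- the maximum `2n+1` sits at 1-indexed position `2(j+1)`:
          σ.val ⟨2 * (j : ℕ) + 1, by have := j.isLt; omega⟩ = Fin.last (2 * n) ∧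
          -- `V` is the set of values (all `< 2n+1`) appearing strictly left of the maximum:
          (∀ v : Fin (2 * n), v ∈ V.val ↔
            ∃ i : Fin (2 * n + 1), (i : ℕ) ≤ 2 * (j : ℕ) ∧ σ.val i = Fin.castSucc v) ∧
          -- `α` is the standardization of the left word `σ₁ ⋯ σ_{2(j+1)−1}`:
          (∀ s t : Fin (2 * (j : ℕ) + 1),
            α.val s < α.val t ↔
              σ.val ⟨(s : ℕ), by have := j.isLt; have := s.isLt; omega⟩ <
                σ.val ⟨(t : ℕ), by have := j.isLt; have := t.isLt; omega⟩) ∧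
          -- `β` is the standardization of the right word `σ_{2(j+1)+1} ⋯ σ_{2n+1}`:
          (∀ s t : Fin (2 * (n - 1 - (j : ℕ)) + 1),
            β.val s < β.val t ↔
              σ.val ⟨2 * (j : ℕ) + 2 + (s : ℕ), by have := j.isLt; have := s.isLt; omega⟩ <
                σ.val ⟨2 * (j : ℕ) + 2 + (t : ℕ), by have := j.isLt; have := t.isLt; omega⟩) := by
  choose F hF using fun σ : {σ : Perm (Fin (2 * n + 1)) // IsUpDown σ} => σ.2.exists_isMaxSplit hn
  refine ⟨F, ⟨fun σ τ hστ => Subtype.ext ((hF σ).perm_unique (hστ ▸ hF τ)), fun q => ?_⟩, ?_⟩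
  · obtain ⟨σ, hσ, h⟩ := SplitData.exists_isUpDown_isMaxSplit q
    exact ⟨⟨σ, hσ⟩, SplitData.eq_of_isMaxSplit (hF _) h⟩
  · intro σ j V α β hσ
    have h := hF σ
    rw [hσ] at h
    exact ⟨h.apply_maxPos, h.mem_iff, h.left, h.right⟩
end

section
/- Define the Entringer numbers E(n,k) for 0 ≤ k ≤ n by the recurrence E(0,0) = 1, E(n,0) = 0 for n ≥ 1, and E(n,k) = E(n,k−1) + E(n−1,n−k) for n ≥ 1 and 1 ≤ k ≤ n. Then for every n, the diagonal value E(n,n) equals A_n, the number of up-down alternating permutations of {1,…,n}. -/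
/-!
Let `entringer n k` count the up-down permutations of `Fin n` whose first value is below `k`.
Deleting the first entry `p` of a down-up permutation of `Fin (n + 1)` and closing the gap in the
values leaves an up-down permutation of `Fin n` starting below `p`, so `entringer n p` also counts
the down-up permutations of `Fin (n + 1)` starting at `p`. Splitting the up-down permutations of
`Fin (n + 1)` starting below `k + 1` by whether they start at `k`, and complementing the values
`i ↦ n - i` of those that do, gives
`entringer (n + 1) (k + 1) = entringer (n + 1) k + entringer n (n - k)`.
So `entringer` solves the Entringer recurrence, whose solution is unique, and `entringer n n = A n`
because every first value is below `n`.
-/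

open Equiv

def Alternating {α : Type*} (r : α → α → Prop) {n : ℕ} (f : Fin n → α) : Prop :=
  ∀ (i : ℕ) (h : i + 1 < n),
    if i % 2 = 0 then r (f ⟨i, Nat.lt_of_succ_lt h⟩) (f ⟨i + 1, h⟩)
    else r (f ⟨i + 1, h⟩) (f ⟨i, Nat.lt_of_succ_lt h⟩)

section Alternating

variable {α β : Type*} {r : α → α → Prop} {n : ℕ}

theorem isUpDown_iff_alternating (σ : Perm (Fin n)) : IsUpDown σ ↔ Alternating (· < ·) σ :=
  Iff.rfl

theorem alternating_comp_iff {s : β → β → Prop} {g : β → α} (hg : ∀ x y, r (g x) (g y) ↔ s x y)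
    {f : Fin n → β} : Alternating r (g ∘ f) ↔ Alternating s f := by
  simp only [Alternating, Function.comp_apply, hg]

theorem alternating_cons_iff {a : α} {f : Fin n → α} :
    Alternating r (Fin.cons a f : Fin (n + 1) → α) ↔
      (∀ h : 0 < n, r a (f ⟨0, h⟩)) ∧ Alternating (flip r) f := by
  have cons_succ (i : ℕ) (h : i + 1 < n + 1) :
      (Fin.cons a f : Fin (n + 1) → α) ⟨i + 1, h⟩ = f ⟨i, by omega⟩ :=
    Fin.cons_succ (α := fun _ => α) a f ⟨i, by omega⟩
  have parity (i : ℕ) : (i + 1) % 2 = 0 ↔ ¬ i % 2 = 0 := by omega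
  constructor
  · intro hf
    refine ⟨fun h => by simpa [cons_succ] using hf 0 (by omega), fun i h => ?_⟩
    have := hf (i + 1) (by omega)
    simp only [cons_succ, parity] at this
    split_ifs at this ⊢ <;> assumption
  · rintro ⟨h0, hf⟩ (_ | i) h
    · simpa [cons_succ] using h0 (by omega)
    · have := hf i (by omega)
      simp only [cons_succ, parity]
      split_ifs at this ⊢ <;> assumption

end Alternating

section PermCons

variable {n : ℕ}

/-- `p.cycleRange` sends `p` to `0` and is monotone on the other values, so multiplying by it
turns `σ` into a permutation fixing `0` without reordering the values at positions `≥ 1`. -/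
def permConsSuccAbove (p : Fin (n + 1)) : Perm (Fin n) ≃ {σ : Perm (Fin (n + 1)) // σ 0 = p} where
  toFun τ := ⟨p.cycleRange⁻¹ * Perm.decomposeFin.symm (0, τ), by simp⟩
  invFun σ := (Perm.decomposeFin (p.cycleRange * σ.1)).2
  left_inv τ := by simp
  right_inv := by
    rintro ⟨σ, rfl⟩
    have h0 : ((0 : Fin (n + 1)), (Perm.decomposeFin ((σ 0).cycleRange * σ)).2) =
        Perm.decomposeFin ((σ 0).cycleRange * σ) :=
      Prod.ext (by simp [Perm.decomposeFin]) rfl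
    ext1
    simp only
    rw [h0, Equiv.symm_apply_apply, inv_mul_cancel_left]

theorem coe_permConsSuccAbove (p : Fin (n + 1)) (τ : Perm (Fin n)) :
    ⇑(permConsSuccAbove p τ : Perm (Fin (n + 1))) = Fin.cons p (p.succAbove ∘ τ) := by
  ext i
  cases i using Fin.cases <;> simp [permConsSuccAbove]

end PermCons

/-- The classical Entringer number `E(n, k)` counts the down-up permutations of `Fin (n + 1)`
starting at `k`; `card_alternating_gt_apply_zero` identifies the two. The guard `0 < n` makes
`entringer 0 k = 1`. -/
noncomputable def entringer (n k : ℕ) : ℕ :=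
  Nat.card {σ : Perm (Fin n) // IsUpDown σ ∧ ∀ h : 0 < n, (σ ⟨0, h⟩ : ℕ) < k}

theorem entringer_zero_zero : entringer 0 0 = 1 :=
  (Nat.card_congr (Equiv.subtypeUnivEquiv fun _ => ⟨fun _ h => by omega, fun h => by omega⟩)).trans
    Nat.card_unique

theorem entringer_succ_zero (n : ℕ) : entringer (n + 1) 0 = 0 :=
  Nat.card_eq_zero.mpr (.inl ⟨fun ⟨_, _, h⟩ => Nat.not_lt_zero _ (h n.succ_pos)⟩)

theorem entringer_self (n : ℕ) : entringer n n = A n :=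
  Nat.card_congr (Equiv.subtypeEquivRight fun σ => and_iff_left fun _ => (σ _).isLt)

theorem card_alternating_gt_apply_zero {n : ℕ} (p : Fin (n + 1)) :
    Nat.card {σ : Perm (Fin (n + 1)) // σ 0 = p ∧ Alternating (· > ·) σ} = entringer n p := by
  rw [entringer, ← Nat.card_congr (Equiv.subtypeSubtypeEquivSubtypeInter _ _)]
  refine (Nat.card_congr ((permConsSuccAbove p).subtypeEquiv fun τ => ?_)).symm
  rw [coe_permConsSuccAbove, alternating_cons_iff,
    alternating_comp_iff (r := flip (· > ·)) (g := p.succAbove) (s := (· < ·)) fun _ _ =>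
      Fin.succAbove_lt_succAbove_iff, ← isUpDown_iff_alternating, and_comm]
  refine and_congr_left' (forall_congr' fun _ => ?_)
  rw [Function.comp_apply, gt_iff_lt, Fin.succAbove_lt_iff_castSucc_lt, Fin.lt_def,
    Fin.val_castSucc]

theorem card_isUpDown_apply_zero {n : ℕ} (p : Fin (n + 1)) :
    Nat.card {σ : Perm (Fin (n + 1)) // σ 0 = p ∧ IsUpDown σ} =
      Nat.card {σ : Perm (Fin (n + 1)) // σ 0 = p.rev ∧ Alternating (· > ·) σ} :=
  Nat.card_congr <| (Equiv.mulLeft Fin.revPerm).subtypeEquiv fun σ => by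
    rw [isUpDown_iff_alternating, Equiv.coe_mulLeft, Perm.coe_mul,
      alternating_comp_iff (s := (· < ·)) fun _ _ => Fin.rev_lt_rev]
    simp [Fin.rev_eq_iff]

theorem entringer_succ (n k : ℕ) :
    entringer (n + 1) k = Nat.card {σ : Perm (Fin (n + 1)) // IsUpDown σ ∧ (σ 0 : ℕ) < k} :=
  Nat.card_congr <| Equiv.subtypeEquivRight fun _ =>
    and_congr_right' (forall_prop_of_true n.succ_pos)

theorem entringer_succ_succ {n k : ℕ} (hk : k ≤ n) :
    entringer (n + 1) (k + 1) = entringer (n + 1) k + entringer n (n - k) := by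
  let p : Fin (n + 1) := ⟨k, Nat.lt_succ_of_le hk⟩
  have split (σ : Perm (Fin (n + 1))) : (IsUpDown σ ∧ (σ 0 : ℕ) < k + 1) ↔
      (IsUpDown σ ∧ (σ 0 : ℕ) < k) ∨ (σ 0 = p ∧ IsUpDown σ) := by
    rw [Nat.lt_succ_iff_lt_or_eq, Fin.ext_iff]
    tauto
  have disjoint : Disjoint (fun σ : Perm (Fin (n + 1)) => IsUpDown σ ∧ (σ 0 : ℕ) < k)
      (fun σ => σ 0 = p ∧ IsUpDown σ) :=
    Pi.disjoint_iff.mpr fun _ => Prop.disjoint_iff.mpr fun ⟨⟨_, hlt⟩, heq, _⟩ =>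
      hlt.ne (Fin.val_eq_of_eq heq)
  classical
  rw [entringer_succ, entringer_succ, Nat.card_congr ((Equiv.subtypeEquivRight split).trans
    (subtypeOrEquiv _ _ disjoint)), Nat.card_sum, card_isUpDown_apply_zero,
    card_alternating_gt_apply_zero, Fin.val_rev, Nat.add_sub_add_right]

theorem eq_entringer_of_recurrence (E : ℕ → ℕ → ℕ) (h0 : E 0 0 = 1)
    (hb : ∀ n : ℕ, 1 ≤ n → E n 0 = 0)
    (hrec : ∀ n k : ℕ, 1 ≤ n → 1 ≤ k → k ≤ n → E n k = E n (k - 1) + E (n - 1) (n - k)) :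
    ∀ n k : ℕ, k ≤ n → E n k = entringer n k
  | 0, 0, _ => h0.trans entringer_zero_zero.symm
  | 0, _ + 1, hk => absurd hk (Nat.not_succ_le_zero _)
  | n + 1, 0, _ => (hb _ n.succ_pos).trans (entringer_succ_zero n).symm
  | n + 1, k + 1, hk => by
    rw [hrec (n + 1) (k + 1) n.succ_pos k.succ_pos hk,
      entringer_succ_succ (Nat.le_of_succ_le_succ hk), Nat.add_sub_cancel, Nat.add_sub_cancel,
      Nat.add_sub_add_right,
      eq_entringer_of_recurrence E h0 hb hrec (n + 1) k (by omega),
      eq_entringer_of_recurrence E h0 hb hrec n (n - k) (Nat.sub_le n k)]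

/-- If `E` satisfies the Entringer recurrence `E(0,0)=1`, `E(n,0)=0` for `n ≥ 1`, and
`E(n,k)=E(n,k−1)+E(n−1,n−k)` for `n ≥ 1`, `1 ≤ k ≤ n`, then the diagonal value
`E(n,n)` equals `A n`. -/
theorem entringer_diagonal (E : ℕ → ℕ → ℕ)
    (h0 : E 0 0 = 1)
    (hb : ∀ n : ℕ, 1 ≤ n → E n 0 = 0)
    (hrec : ∀ n k : ℕ, 1 ≤ n → 1 ≤ k → k ≤ n → E n k = E n (k - 1) + E (n - 1) (n - k)) :
    ∀ n : ℕ, E n n = A n := fun n =>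
  (eq_entringer_of_recurrence E h0 hb hrec n n le_rfl).trans (entringer_self n)
end

section
/- Define the Entringer numbers E(n,k) for 0 ≤ k ≤ n by the recurrence E(0,0) = 1, E(n,0) = 0 for n ≥ 1, and E(n,k) = E(n,k−1) + E(n−1,n−k) for n ≥ 1 and 1 ≤ k ≤ n. Then for all n ≥ 1 and 0 ≤ k ≤ n, E(n,k) equals the number of down-up alternating permutations σ of {1,…,n+1} (i.e. σ₁>σ₂<σ₃>σ₄<⋯) whose first entry is σ₁ = k+1. -/
/-!
Write `D(n, k)` for the number of down-up permutations of `Fin (n + 1)` starting with `k`, and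
split those of `Fin (n + 2)` starting with `k + 1` according to their second entry, which is
at most `k`. If it is not `k`, then the values `k` and `k + 1` are not adjacent, and exchanging
them is a bijection onto the down-up permutations starting with `k`. If it is `k`, deleting the
first entry and relabelling the remaining values by the order-reversing bijection onto
`Fin (n + 1)` turns the up-down tail into a down-up permutation starting with `n - k`, again
bijectively. Hence `D(n + 1, k + 1) = D(n + 1, k) + D(n, n - k)`, the Entringer recurrence,
and `D` has the same boundary values as `E`.
-/

/-- A permutation `σ` of `{1,…,m}` (modeled on `Fin m`, positions 0-indexed) is
down-up alternating if `σ₁ > σ₂ < σ₃ > σ₄ < ⋯` (1-indexed). -/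
def IsDownUp {m : ℕ} (σ : Equiv.Perm (Fin m)) : Prop :=
  ∀ (i : ℕ) (h : i + 1 < m),
    if i % 2 = 0 then σ ⟨i + 1, h⟩ < σ ⟨i, Nat.lt_of_succ_lt h⟩
    else σ ⟨i, Nat.lt_of_succ_lt h⟩ < σ ⟨i + 1, h⟩

open Equiv Function

lemma Nat.card_subtype_eq_card_and_add_card_and_not {α : Type*} [Finite α] (p q : α → Prop) :
    Nat.card {x // p x} = Nat.card {x // p x ∧ q x} + Nat.card {x // p x ∧ ¬q x} := by
  classical
  have := Fintype.ofFinite α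
  simp only [Nat.card_eq_fintype_card, Fintype.card_subtype, ← Finset.filter_filter]
  exact (Finset.card_filter_add_card_filter_not _).symm

lemma Fin.swap_lt_swap_iff {m : ℕ} {a b x y : Fin m} (hab : (b : ℕ) = a + 1)
    (h₁ : ¬(x = a ∧ y = b)) (h₂ : ¬(x = b ∧ y = a)) :
    swap a b x < swap a b y ↔ x < y := by
  rw [swap_apply_def, swap_apply_def]
  split_ifs <;> simp only [Fin.ext_iff, Fin.lt_def] at * <;> omega

namespace IsDownUp

variable {m : ℕ}

lemma apply_one_lt_apply_zero {σ : Perm (Fin (m + 2))} (hσ : IsDownUp σ) : σ 1 < σ 0 :=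
  hσ 0 (by omega)

lemma swap_mul {σ : Perm (Fin m)} (hσ : IsDownUp σ) {a b : Fin m} (hab : (b : ℕ) = a + 1)
    (hb : (σ⁻¹ b : ℕ) ≠ σ⁻¹ a + 1) (ha : (σ⁻¹ a : ℕ) ≠ σ⁻¹ b + 1) :
    IsDownUp (swap a b * σ) := by
  intro i h
  have key := hσ i h
  have h₁ : ¬(σ ⟨i + 1, h⟩ = a ∧ σ ⟨i, by omega⟩ = b) := by
    rintro ⟨hi, hi'⟩
    simp [← hi, ← hi'] at ha
  have h₂ : ¬(σ ⟨i + 1, h⟩ = b ∧ σ ⟨i, by omega⟩ = a) := by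
    rintro ⟨hi, hi'⟩
    simp [← hi, ← hi'] at hb
  simp only [Perm.mul_apply]
  split_ifs at key ⊢
  · rwa [Fin.swap_lt_swap_iff hab h₁ h₂]
  · rwa [Fin.swap_lt_swap_iff hab (by tauto) (by tauto)]

end IsDownUp

lemma isDownUp_iff_of_apply_succ {m : ℕ} {σ : Perm (Fin (m + 2))} {τ : Perm (Fin (m + 1))}
    {f : Fin (m + 1) → Fin (m + 2)} (hf : StrictAnti f) (hστ : ∀ i, σ i.succ = f (τ i)) :
    IsDownUp σ ↔ σ 1 < σ 0 ∧ IsDownUp τ := by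
  have shift : ∀ i (h : i + 1 < m + 1),
      ((if (i + 1) % 2 = 0 then σ ⟨i + 1 + 1, by omega⟩ < σ ⟨i + 1, by omega⟩
        else σ ⟨i + 1, by omega⟩ < σ ⟨i + 1 + 1, by omega⟩) ↔
      if i % 2 = 0 then τ ⟨i + 1, h⟩ < τ ⟨i, by omega⟩ else τ ⟨i, by omega⟩ < τ ⟨i + 1, h⟩) := by
    intro i h
    have hστ' : ∀ j (hj : j < m + 1), σ ⟨j + 1, by omega⟩ = f (τ ⟨j, hj⟩) :=
      fun j hj => hστ ⟨j, hj⟩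
    rw [hστ' i (by omega), hστ' (i + 1) h, hf.lt_iff_gt, hf.lt_iff_gt]
    split_ifs <;> omega
  constructor
  · intro hσ
    exact ⟨hσ.apply_one_lt_apply_zero, fun i h => (shift i h).1 (hσ (i + 1) (by omega))⟩
  · rintro ⟨h01, hτ⟩ (_ | i) h
    · exact h01
    · exact (shift i (by omega)).2 (hτ i (by omega))

namespace Fin

variable {n : ℕ}

/-- The permutation starting with `k` whose remaining entries are those of `τ`, carried onto
`Fin (n + 2) \ {k}` by the order-reversing bijection `i ↦ k.succAbove i.rev`. -/
def consPerm (k : Fin (n + 2)) (τ : Perm (Fin (n + 1))) : Perm (Fin (n + 2)) :=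
  (finSuccEquiv (n + 1)).trans ((τ.trans revPerm).optionCongr.trans (finSuccEquiv' k).symm)

@[simp] lemma consPerm_zero (k : Fin (n + 2)) (τ : Perm (Fin (n + 1))) : consPerm k τ 0 = k := by
  simp [consPerm]

@[simp] lemma consPerm_succ (k : Fin (n + 2)) (τ : Perm (Fin (n + 1))) (i : Fin (n + 1)) :
    consPerm k τ i.succ = k.succAbove (τ i).rev := by
  simp [consPerm]

lemma consPerm_injective (k : Fin (n + 2)) : Injective (consPerm k) := by
  intro τ τ' h
  ext i : 1
  simpa using DFunLike.congr_fun h i.succ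

lemma exists_consPerm_eq {σ : Perm (Fin (n + 2))} {k : Fin (n + 2)} (hσ : σ 0 = k) :
    ∃ τ, consPerm k τ = σ := by
  set e := (finSuccEquiv (n + 1)).symm.trans (σ.trans (finSuccEquiv' k))
  refine ⟨(removeNone e).trans revPerm, Perm.ext fun j => ?_⟩
  cases j using Fin.cases with
  | zero => simp [hσ]
  | succ i =>
    obtain ⟨z, hz⟩ := exists_succAbove_eq (x := σ i.succ) (y := k)
      (hσ ▸ σ.injective.ne (succ_ne_zero i))
    have : removeNone e i = z := by
      apply Option.some_injective
      rw [removeNone_some e ⟨z, by simp [e, ← hz]⟩]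
      simp [e, ← hz]
    simp [this, hz]

lemma card_consPerm (k : Fin (n + 2)) (P : Perm (Fin (n + 2)) → Prop) :
    Nat.card {τ : Perm (Fin (n + 1)) // P (consPerm k τ)} =
      Nat.card {σ : Perm (Fin (n + 2)) // P σ ∧ σ 0 = k} := by
  refine Nat.card_eq_of_bijective (fun τ => ⟨consPerm k τ, τ.2, consPerm_zero k τ⟩)
    ⟨fun τ τ' h => Subtype.ext (consPerm_injective k (congr_arg Subtype.val h)), ?_⟩
  rintro ⟨σ, hP, hσ⟩
  obtain ⟨τ, rfl⟩ := exists_consPerm_eq hσ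
  exact ⟨⟨τ, hP⟩, rfl⟩

end Fin

section Counting

variable {n : ℕ}

lemma isDownUp_consPerm_iff (k : Fin (n + 2)) (τ : Perm (Fin (n + 1))) :
    IsDownUp (Fin.consPerm k τ) ↔ k.succAbove (τ 0).rev < k ∧ IsDownUp τ := by
  have hanti : StrictAnti fun i : Fin (n + 1) => k.succAbove i.rev :=
    k.strictMono_succAbove.comp_strictAnti Fin.rev_strictAnti
  rw [isDownUp_iff_of_apply_succ hanti (Fin.consPerm_succ k τ), ← Fin.succ_zero_eq_one,
    Fin.consPerm_succ, Fin.consPerm_zero]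

lemma card_downUp_zero_succ_one_castSucc (k : Fin (n + 1)) :
    Nat.card {σ : Perm (Fin (n + 2)) // (IsDownUp σ ∧ σ 0 = k.succ) ∧ σ 1 = k.castSucc} =
      Nat.card {τ : Perm (Fin (n + 1)) // IsDownUp τ ∧ τ 0 = k.rev} := by
  have hpred : ∀ σ : Perm (Fin (n + 2)), (IsDownUp σ ∧ σ 0 = k.succ) ∧ σ 1 = k.castSucc ↔
      (IsDownUp σ ∧ σ 1 = k.castSucc) ∧ σ 0 = k.succ := fun σ => by tauto
  simp_rw [hpred, ← Fin.card_consPerm, isDownUp_consPerm_iff, ← Fin.succ_zero_eq_one,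
    Fin.consPerm_succ]
  refine Nat.card_congr (Equiv.subtypeEquivRight fun τ => ?_)
  have hval : k.succ.succAbove (τ 0).rev = k.castSucc ↔ τ 0 = k.rev := by
    rw [← Fin.succAbove_succ_self, Fin.succAbove_right_inj, Fin.rev_eq_iff]
  rw [hval]
  exact ⟨fun ⟨⟨_, hτ⟩, h0⟩ => ⟨hτ, h0⟩,
    fun ⟨hτ, h0⟩ => ⟨⟨hval.2 h0 ▸ Fin.castSucc_lt_succ, hτ⟩, h0⟩⟩

lemma card_downUp_zero_succ_one_ne_castSucc (k : Fin (n + 1)) :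
    Nat.card {σ : Perm (Fin (n + 2)) // (IsDownUp σ ∧ σ 0 = k.succ) ∧ ¬σ 1 = k.castSucc} =
      Nat.card {σ : Perm (Fin (n + 2)) // IsDownUp σ ∧ σ 0 = k.castSucc} := by
  set s := swap k.castSucc k.succ
  have hab : (k.succ : ℕ) = k.castSucc + 1 := by simp
  have fwd : ∀ σ : Perm (Fin (n + 2)), IsDownUp σ → σ 0 = k.succ → σ 1 ≠ k.castSucc →
      IsDownUp (s * σ) ∧ (s * σ) 0 = k.castSucc := by
    intro σ hσ h0 h1
    have hb : σ⁻¹ k.succ = 0 := by simp [← h0]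
    have ha : σ⁻¹ k.castSucc ≠ 1 := fun h => h1 (by simp [← h])
    refine ⟨hσ.swap_mul hab (by simp [hb]) ?_, by simp [s, h0]⟩
    rw [hb]
    exact fun h => ha (Fin.ext h)
  have bwd : ∀ ρ : Perm (Fin (n + 2)), IsDownUp ρ → ρ 0 = k.castSucc →
      IsDownUp (s * ρ) ∧ (s * ρ) 0 = k.succ ∧ (s * ρ) 1 ≠ k.castSucc := by
    intro ρ hρ h0
    have h1 : ρ 1 < k.castSucc := h0 ▸ hρ.apply_one_lt_apply_zero
    have ha : ρ⁻¹ k.castSucc = 0 := by simp [← h0]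
    have hb : ρ⁻¹ k.succ ≠ 1 := fun h => by
      simpa [← h] using h1.trans Fin.castSucc_lt_succ
    refine ⟨hρ.swap_mul hab ?_ (by simp [ha]), by simp [s, h0], ?_⟩
    · rw [ha]
      exact fun h => hb (Fin.ext h)
    · simp [s, swap_apply_of_ne_of_ne h1.ne (h1.trans Fin.castSucc_lt_succ).ne, h1.ne]
  exact Nat.card_congr (Equiv.subtypeEquiv (Equiv.mulLeft s) fun σ =>
    ⟨fun ⟨⟨hσ, h0⟩, h1⟩ => fwd σ hσ h0 h1,
     fun ⟨hσ, h0⟩ => by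
      obtain ⟨hσ', h0', h1'⟩ := bwd _ hσ h0
      simp only [Equiv.coe_mulLeft, s, swap_mul_self_mul] at hσ' h0' h1'
      exact ⟨⟨hσ', h0'⟩, h1'⟩⟩)

lemma card_downUp_zero_succ (k : Fin (n + 1)) :
    Nat.card {σ : Perm (Fin (n + 2)) // IsDownUp σ ∧ σ 0 = k.succ} =
      Nat.card {σ : Perm (Fin (n + 2)) // IsDownUp σ ∧ σ 0 = k.castSucc} +
        Nat.card {τ : Perm (Fin (n + 1)) // IsDownUp τ ∧ τ 0 = k.rev} := by
  rw [Nat.card_subtype_eq_card_and_add_card_and_not _ (fun σ => σ 1 = k.castSucc),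
    card_downUp_zero_succ_one_castSucc, card_downUp_zero_succ_one_ne_castSucc, add_comm]

end Counting

noncomputable def downUpCount (n k : ℕ) : ℕ :=
  Nat.card {σ : Perm (Fin (n + 1)) // IsDownUp σ ∧ (σ 0 : ℕ) = k}

lemma downUpCount_zero_zero : downUpCount 0 0 = 1 := by
  have hall : ∀ σ : Perm (Fin 1), IsDownUp σ ∧ (σ 0 : ℕ) = 0 :=
    fun σ => ⟨fun i hi => absurd hi (by omega), by omega⟩
  rw [downUpCount, Nat.card_congr (Equiv.subtypeUnivEquiv hall)]
  simp

lemma downUpCount_succ_zero (n : ℕ) : downUpCount (n + 1) 0 = 0 := by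
  rw [downUpCount, Nat.card_eq_zero]
  left
  constructor
  rintro ⟨σ, hσ, h0⟩
  have := hσ.apply_one_lt_apply_zero
  simp [Fin.lt_def, h0] at this

lemma downUpCount_succ_succ {n k : ℕ} (hk : k ≤ n) :
    downUpCount (n + 1) (k + 1) = downUpCount (n + 1) k + downUpCount n (n - k) := by
  set K : Fin (n + 1) := ⟨k, by omega⟩
  have hsucc : downUpCount (n + 1) (k + 1) =
      Nat.card {σ : Perm (Fin (n + 2)) // IsDownUp σ ∧ σ 0 = K.succ} :=
    Nat.card_congr (Equiv.subtypeEquivRight fun σ => by simp [K, Fin.ext_iff])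
  have hcastSucc : downUpCount (n + 1) k =
      Nat.card {σ : Perm (Fin (n + 2)) // IsDownUp σ ∧ σ 0 = K.castSucc} :=
    Nat.card_congr (Equiv.subtypeEquivRight fun σ => by simp [K, Fin.ext_iff])
  have hrev : downUpCount n (n - k) =
      Nat.card {τ : Perm (Fin (n + 1)) // IsDownUp τ ∧ τ 0 = K.rev} :=
    Nat.card_congr (Equiv.subtypeEquivRight fun τ => by simp [K, Fin.ext_iff])
  rw [hsucc, hcastSucc, hrev, card_downUp_zero_succ]

lemma entringer_eq_downUpCount (E : ℕ → ℕ → ℕ) (h0 : E 0 0 = 1) (hb : ∀ n : ℕ, 1 ≤ n → E n 0 = 0)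
    (hrec : ∀ n k : ℕ, 1 ≤ n → 1 ≤ k → k ≤ n → E n k = E n (k - 1) + E (n - 1) (n - k)) :
    ∀ n k : ℕ, k ≤ n → E n k = downUpCount n k := by
  intro n
  induction n with
  | zero =>
    intro k hk
    rw [Nat.le_zero.mp hk, h0, downUpCount_zero_zero]
  | succ n ihn =>
    intro k hk
    induction k with
    | zero => rw [hb _ (by omega), downUpCount_succ_zero]
    | succ k ihk =>
      rw [hrec (n + 1) (k + 1) (by omega) (by omega) hk, downUpCount_succ_succ (by omega),
        Nat.add_sub_cancel, Nat.add_sub_cancel, Nat.add_sub_add_right, ihk (by omega),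
        ihn _ (by omega)]

/-- If `E` satisfies the Entringer recurrence, then for `n ≥ 1` and `0 ≤ k ≤ n`,
`E(n,k)` counts the down-up alternating permutations of `{1,…,n+1}` whose first
entry is `k+1` (as an element of `Fin (n+1)`, the value `⟨k, _⟩`). -/
theorem entringer_counts_downup (E : ℕ → ℕ → ℕ)
    (h0 : E 0 0 = 1)
    (hb : ∀ n : ℕ, 1 ≤ n → E n 0 = 0)
    (hrec : ∀ n k : ℕ, 1 ≤ n → 1 ≤ k → k ≤ n → E n k = E n (k - 1) + E (n - 1) (n - k)) :
    ∀ n k : ℕ, ∀ (hn : 1 ≤ n) (hk : k ≤ n),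
      E n k = Nat.card {σ : Equiv.Perm (Fin (n + 1)) //
        IsDownUp σ ∧ σ ⟨0, by omega⟩ = ⟨k, by omega⟩} := by
  intro n k _ hk
  rw [entringer_eq_downUpCount E h0 hb hrec n k hk, downUpCount]
  exact Nat.card_congr (Equiv.subtypeEquivRight fun σ => by simp [Fin.ext_iff])
end

section
/- Let f(x) = tan x + 1/cos x on (−π/2, π/2). Then for every natural number n and every real x with 0 ≤ x < π/2, the n-th derivative of f at x is nonnegative: f^{(n)}(x) ≥ 0. -/
/-! Since `sec' = sec * tan` and `tan' = sec ^ 2`, every derivative of `tan + sec` is a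
polynomial with nonnegative coefficients in `sec` and `tan`, and both functions are
nonnegative on `[0, π/2)`. -/

inductive SecTanExpr : Type
  | sec : SecTanExpr
  | tan : SecTanExpr
  | add : SecTanExpr → SecTanExpr → SecTanExpr
  | mul : SecTanExpr → SecTanExpr → SecTanExpr

namespace SecTanExpr

open Real

noncomputable def eval : SecTanExpr → ℝ → ℝ
  | sec => fun x => 1 / cos x
  | tan => Real.tan
  | add a b => fun x => a.eval x + b.eval x
  | mul a b => fun x => a.eval x * b.eval x

def derivative : SecTanExpr → SecTanExpr
  | sec => mul sec tan
  | tan => mul sec sec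
  | add a b => add a.derivative b.derivative
  | mul a b => add (mul a.derivative b) (mul a b.derivative)

lemma hasDerivAt_eval (e : SecTanExpr) {x : ℝ} (hx : cos x ≠ 0) :
    HasDerivAt e.eval (e.derivative.eval x) x := by
  induction e with
  | sec =>
    refine ((hasDerivAt_const x 1).div (hasDerivAt_cos x) hx).congr_deriv ?_
    show _ = 1 / cos x * Real.tan x
    rw [tan_eq_sin_div_cos]
    field_simp
    ring
  | tan =>
    refine (hasDerivAt_tan hx).congr_deriv ?_
    show _ = 1 / cos x * (1 / cos x)
    field_simp
  | add a b ha hb => exact ha.add hb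
  | mul a b ha hb => exact ha.mul hb

lemma iteratedDeriv_eval_eqOn (e : SecTanExpr) (n : ℕ) :
    Set.EqOn (iteratedDeriv n e.eval) (derivative^[n] e).eval {x | cos x ≠ 0} := by
  induction n with
  | zero => intro x _; rfl
  | succ n ih =>
    intro x hx
    have hopen : IsOpen {x | cos x ≠ 0} := isOpen_ne_fun continuous_cos continuous_const
    rw [iteratedDeriv_succ, (Filter.eventuallyEq_of_mem (hopen.mem_nhds hx) ih).deriv_eq,
      ((derivative^[n] e).hasDerivAt_eval hx).deriv, Function.iterate_succ_apply']

lemma eval_nonneg (e : SecTanExpr) {x : ℝ} (hsec : 0 ≤ 1 / cos x) (htan : 0 ≤ Real.tan x) :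
    0 ≤ e.eval x := by
  induction e with
  | sec => exact hsec
  | tan => exact htan
  | add a b ha hb => exact add_nonneg ha hb
  | mul a b ha hb => exact mul_nonneg ha hb

end SecTanExpr

/-- With `f x = tan x + 1/cos x`: for every `n` and every `x ∈ [0, π/2)`,
the `n`-th derivative of `f` at `x` is nonnegative. -/
theorem iteratedDeriv_nonneg (n : ℕ) (x : ℝ) (hx0 : 0 ≤ x) (hx : x < Real.pi / 2) :
    0 ≤ iteratedDeriv n (fun y : ℝ => Real.tan y + 1 / Real.cos y) x := by
  have hcos : 0 < Real.cos x := Real.cos_pos_of_mem_Ioo ⟨by linarith [Real.pi_pos], hx⟩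
  have htan : 0 ≤ Real.tan x := Real.tan_nonneg_of_nonneg_of_le_pi_div_two hx0 hx.le
  change 0 ≤ iteratedDeriv n (SecTanExpr.add .tan .sec).eval x
  rw [SecTanExpr.iteratedDeriv_eval_eqOn _ n hcos.ne']
  exact SecTanExpr.eval_nonneg _ (by positivity) htan
end
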